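/- (Corollary 3.18) Suppose k = 0 and δ = 0 (so Υₙ = 1 and C(δ,n) = 1 for all n, and Df = f, Dg = g). Let 0 ≤ ζ < 1 and let f(z) = z + Σ_{n≥2} aₙ zⁿ belong to the class B_Σ(1, ζ). Then |a₂| ≤ √(2(1−ζ)/3) and |a₃| ≤ 2(1−ζ)/3 + (1−ζ)². -/

import Mathlib

open Complex

noncomputable section

/-- The open unit disk in ℂ. -/
def unitDisk : Set ℂ := Metric.ball 0 1

/-- Υₙ = (λ(α+β−1)(n−1))^k. -/
def Ups (lam al be : ℝ) (k n : ℕ) : ℝ := (lam * (al + be - 1) * ((n : ℝ) - 1)) ^ k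

/-- C(δ,n) = Γ(n+δ)/(Γ(n)·Γ(δ+1)). -/
def Cdel (d : ℝ) (n : ℕ) : ℝ :=
  Real.Gamma ((n : ℝ) + d) / (Real.Gamma (n : ℝ) * Real.Gamma (d + 1))

/-- The operator D applied to a function with Taylor coefficients `a`
(where `a 0 = 0`, `a 1 = 1`): (Df)(z) = z + Σ_{n≥2} Υₙ·C(δ,n)·aₙ zⁿ. -/
def Dop (lam al be d : ℝ) (k : ℕ) (a : ℕ → ℂ) : ℂ → ℂ := fun z =>
  z + ∑' n : ℕ, if 2 ≤ n then (Ups lam al be k n : ℂ) * (Cdel d n : ℂ) * a n * z ^ n else 0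

/-- Subordination F ≺ G on the unit disk. -/
def Subord (F G : ℂ → ℂ) : Prop :=
  ∃ u : ℂ → ℂ, AnalyticOnNhd ℂ u unitDisk ∧ u 0 = 0 ∧
    (∀ z ∈ unitDisk, ‖u z‖ < 1) ∧ ∀ z ∈ unitDisk, F z = G (u z)

/-- z ↦ (z·F′(z)/F(z))·((F(z)/z)^γ), with the value 1 at the origin
(principal-branch complex power). -/
def bazFun (g : ℝ) (F : ℂ → ℂ) : ℂ → ℂ := fun z =>
  if z = 0 then 1 else (z * deriv F z / F z) * ((F z / z) ^ (g : ℂ))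

/-- `f` is analytic on the unit disk, normalized, with Taylor coefficients `a`
(`a 0 = 0`, `a 1 = 1`). -/
def IsInA (f : ℂ → ℂ) (a : ℕ → ℂ) : Prop :=
  AnalyticOnNhd ℂ f unitDisk ∧ a 0 = 0 ∧ a 1 = 1 ∧
    ∀ z ∈ unitDisk, HasSum (fun n => a n * z ^ n) (f z)

/-- Membership of `f` (with coefficients `a`, and inverse `g` with coefficients `b`)
in the class B_Σ(γ, φ). -/
def MemB (lam al be d : ℝ) (k : ℕ) (g : ℝ) (φ : ℂ → ℂ)
    (f gf : ℂ → ℂ) (a b : ℕ → ℂ) : Prop :=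
  IsInA f a ∧ Set.InjOn f unitDisk ∧
  IsInA gf b ∧ Set.InjOn gf unitDisk ∧
  (∀ w : ℂ, ‖w‖ < 1 / 4 → f (gf w) = w) ∧
  b 2 = -a 2 ∧ b 3 = 2 * a 2 ^ 2 - a 3 ∧
  (∀ z ∈ unitDisk, z ≠ 0 → Dop lam al be d k a z ≠ 0) ∧
  (∀ z ∈ unitDisk, z ≠ 0 → Dop lam al be d k b z ≠ 0) ∧
  Subord (bazFun g (Dop lam al be d k a)) φ ∧
  Subord (bazFun g (Dop lam al be d k b)) φ

/-!
For `k = δ = 0` the operator `D` is the identity on the disk, and for `γ = 1` the function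
`(z f'(z) / f(z)) · (f(z) / z)` is just `f'`; so `f' ≺ φ` and `g' ≺ φ` with
`φ(z) = (1 + κ z)/(1 - z)`, `κ = 1 - 2ζ`. Writing `f' = φ ∘ u` for a Schwarz function `u`,
the relation `f' - 1 = u (κ + f')` differentiated at `0` gives `2 a₂ = (1 + κ) u'(0)` and
`3 a₃ = (1 + κ) (u''(0)/2 + u'(0)²)`. The Schwarz lemma bounds `|u'(0)|` by `1`, and the
Schwarz–Pick inequality for `u(z)/z` bounds `|u''(0)/2|` by `1 - |u'(0)|²`, so
`|3 a₃| ≤ 2(1 - ζ)`; the same holds for `b₃ = 2 a₂² - a₃`. Then `6 a₂² = 3 a₃ + 3 b₃`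
and `6 a₃ = 6 a₂² + 3 a₃ - 3 b₃` give both bounds.
-/

open Metric Filter Topology Set ComplexConjugate NNReal Nat

namespace Complex

theorem norm_sub_le_norm_one_sub_conj_mul {A w : ℂ} (hA : ‖A‖ ≤ 1) (hw : ‖w‖ ≤ 1) :
    ‖w - A‖ ≤ ‖1 - conj A * w‖ := by
  have key :
      ‖1 - conj A * w‖ ^ 2 - ‖w - A‖ ^ 2 = (1 - ‖A‖ ^ 2) * (1 - ‖w‖ ^ 2) := by
    apply ofReal_injective
    push_cast
    simp only [← conj_mul', map_sub, map_mul, map_one, conj_conj]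
    ring
  have hsq : ‖w - A‖ ^ 2 ≤ ‖1 - conj A * w‖ ^ 2 := by
    rw [← sub_nonneg, key]
    exact mul_nonneg (sub_nonneg.2 (pow_le_one₀ (norm_nonneg A) hA))
      (sub_nonneg.2 (pow_le_one₀ (norm_nonneg w) hw))
  exact (pow_le_pow_iff_left₀ (norm_nonneg _) (norm_nonneg _) two_ne_zero).1 hsq

theorem norm_deriv_zero_le_one_sub_sq_of_mapsTo_ball {h : ℂ → ℂ}
    (hd : DifferentiableOn ℂ h (ball 0 1)) (hmaps : MapsTo h (ball 0 1) (closedBall 0 1)) :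
    ‖deriv h 0‖ ≤ 1 - ‖h 0‖ ^ 2 := by
  have h0 : (0 : ℂ) ∈ ball (0 : ℂ) 1 := mem_ball_self one_pos
  have hle : ∀ z ∈ ball (0 : ℂ) 1, ‖h z‖ ≤ 1 := fun z hz => by simpa using hmaps hz
  rcases (hle 0 h0).lt_or_eq with hA | hA
  · -- Compose with the disk automorphism sending `h 0` to `0` and apply the Schwarz lemma.
    set A := h 0
    have hden : ∀ z ∈ ball (0 : ℂ) 1, 1 - conj A * h z ≠ 0 := by
      intro z hz hzero
      have : ‖conj A * h z‖ < 1 := by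
        rw [norm_mul, norm_conj]
        nlinarith [hle z hz, norm_nonneg A, norm_nonneg (h z)]
      rw [← eq_of_sub_eq_zero hzero, norm_one] at this
      exact this.false
    set g : ℂ → ℂ := fun z => (h z - A) / (1 - conj A * h z)
    have hgd : DifferentiableOn ℂ g (ball 0 1) :=
      (hd.sub_const A).div ((differentiableOn_const 1).sub ((differentiableOn_const _).mul hd)) hden
    have hgmaps : MapsTo g (ball 0 1) (closedBall (g 0) 1) := by
      intro z hz
      rw [show g 0 = 0 by simp [g, A], mem_closedBall_zero_iff, norm_div,
        div_le_one (norm_pos_iff.2 (hden z hz))]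
      exact norm_sub_le_norm_one_sub_conj_mul hA.le (hle z hz)
    have hh' : HasDerivAt h (deriv h 0) 0 :=
      (hd.differentiableAt (ball_mem_nhds 0 one_pos)).hasDerivAt
    have hg' : deriv g 0 * (1 - ‖A‖ ^ 2 : ℝ) = deriv h 0 := by
      have hg : HasDerivAt g _ 0 :=
        (hh'.sub_const A).fun_div ((hh'.const_mul (conj A)).const_sub 1) (hden 0 h0)
      have hden0 := hden 0 h0
      rw [hg.deriv]
      push_cast
      rw [← conj_mul']
      field_simp
      ring
    have hA2 : 0 < 1 - ‖A‖ ^ 2 := by nlinarith [norm_nonneg A]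
    rw [← hg', norm_mul, norm_real, Real.norm_of_nonneg hA2.le]
    exact mul_le_of_le_one_left hA2.le (norm_deriv_le_one_of_mapsTo_ball hgd hgmaps one_pos)
  · -- `‖h‖` attains its maximum at `0`, so `h` is locally constant there.
    have hmax : IsLocalMax (norm ∘ h) 0 :=
      Filter.mem_of_superset (ball_mem_nhds 0 one_pos) fun z hz => by simpa [hA] using hle z hz
    have hconst : h =ᶠ[𝓝 0] fun _ => h 0 := eventually_eq_of_isLocalMax_norm
      (Filter.mem_of_superset (ball_mem_nhds 0 one_pos) fun z hz =>
        hd.differentiableAt (isOpen_ball.mem_nhds hz)) hmax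
    rw [hconst.deriv_eq, deriv_const, hA]
    norm_num

theorem norm_iteratedDeriv_two_zero_div_two_le_of_mapsTo_ball {u : ℂ → ℂ}
    (hu : DifferentiableOn ℂ u (ball 0 1)) (hu0 : u 0 = 0)
    (hmaps : MapsTo u (ball 0 1) (ball 0 1)) :
    ‖iteratedDeriv 2 u 0 / 2‖ ≤ 1 - ‖deriv u 0‖ ^ 2 := by
  set w := dslope u 0
  have hw : DifferentiableOn ℂ w (ball 0 1) :=
    (differentiableOn_dslope (ball_mem_nhds 0 one_pos)).2 hu
  have hwmaps : MapsTo w (ball 0 1) (closedBall 0 1) := fun z hz => by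
    have hmaps' : MapsTo u (ball 0 1) (closedBall (u 0) 1) := by
      rw [hu0]
      exact hmaps.mono_right ball_subset_closedBall
    simpa using norm_dslope_le_div_of_mapsTo_ball hu hmaps' hz
  have huw : u = id * w := funext fun z => by simpa [hu0] using (sub_smul_dslope u 0 z).symm
  have hu2 : iteratedDeriv 2 u 0 = 2 * deriv w 0 := by
    rw [huw, iteratedDeriv_mul contDiffAt_id (hw.analyticAt (ball_mem_nhds 0 one_pos)).contDiffAt]
    simp [Finset.sum_range_succ, iteratedDeriv_id]
  rw [hu2, mul_div_cancel_left₀ _ two_ne_zero, ← dslope_same u 0]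
  exact norm_deriv_zero_le_one_sub_sq_of_mapsTo_ball hw hwmaps

end Complex

theorem deriv_and_iteratedDeriv_two_zero_of_eventuallyEq_mobius_comp {κ : ℂ} {F u : ℂ → ℂ}
    (hF : AnalyticAt ℂ F 0) (hu : AnalyticAt ℂ u 0) (hu0 : u 0 = 0)
    (h : ∀ᶠ z in 𝓝 0, F z = (1 + κ * u z) / (1 - u z)) :
    deriv F 0 = (1 + κ) * deriv u 0 ∧
      iteratedDeriv 2 F 0 = (1 + κ) * (iteratedDeriv 2 u 0 + 2 * deriv u 0 ^ 2) := by
  have hF0 : F 0 = 1 := by simpa [hu0] using h.self_of_nhds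
  have hlin : F =ᶠ[𝓝 0] fun z => 1 + (u * fun z => κ + F z) z := by
    have hu1 : ∀ᶠ z in 𝓝 0, u z ≠ 1 := hu.continuousAt.eventually_ne (by simp [hu0])
    filter_upwards [h, hu1] with z hz hz1
    rw [Pi.mul_apply, hz]
    field_simp [sub_ne_zero.2 hz1.symm]
    ring
  have leibniz : ∀ n, 0 < n → iteratedDeriv n F 0 = ∑ i ∈ Finset.range (n + 1),
      n.choose i * iteratedDeriv i u 0 * iteratedDeriv (n - i) (fun z => κ + F z) 0 := by
    intro n hn
    rw [hlin.iteratedDeriv_eq, iteratedDeriv_const_add hn]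
    exact iteratedDeriv_mul hu.contDiffAt (contDiffAt_const.add hF.contDiffAt)
  have h1 := leibniz 1 one_pos
  have h2 := leibniz 2 two_pos
  simp only [iteratedDeriv_one, Finset.sum_range_succ, Finset.range_one, Finset.sum_singleton,
    Nat.choose_succ_self_right, zero_add, Nat.cast_one, iteratedDeriv_zero, hu0, mul_zero,
    tsub_zero, iteratedDeriv_const_add, zero_mul, Nat.choose_self, one_mul, tsub_self, hF0,
    Nat.choose_zero_right, Nat.cast_ofNat, Nat.add_one_sub_one, Nat.reduceAdd, zero_lt_one,
    zero_lt_two] at h1 h2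
  exact ⟨by rw [h1]; ring, by rw [h2, h1]; ring⟩

theorem hasFPowerSeriesOnBall_ofScalars_of_hasSum {f : ℂ → ℂ} {a : ℕ → ℂ} {r : ℝ≥0}
    (hr : 0 < r) (h : ∀ z ∈ ball (0 : ℂ) r, HasSum (fun n => a n * z ^ n) (f z)) :
    HasFPowerSeriesOnBall f (FormalMultilinearSeries.ofScalars ℂ a) 0 r where
  r_le := by
    refine ENNReal.le_of_forall_nnreal_lt fun s hs => ?_
    have hsum := h s (by simpa using hs)
    refine FormalMultilinearSeries.le_radius_of_tendsto _ (l := 0) ?_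
    simpa [FormalMultilinearSeries.ofScalars_norm] using hsum.summable.tendsto_atTop_zero.norm
  r_pos := by simpa using hr
  hasSum {y} hy := by
    simpa [FormalMultilinearSeries.ofScalars_apply_eq, mul_comm] using h y (by simpa using hy)

theorem Subord.congr_left {F F' G : ℂ → ℂ} (h : Subord F G) (hF : EqOn F F' unitDisk) :
    Subord F' G := by
  obtain ⟨u, hu, hu0, hub, heq⟩ := h
  exact ⟨u, hu, hu0, hub, fun z hz => (hF hz).symm.trans (heq z hz)⟩

theorem bazFun_one_of_ne_zero {F : ℂ → ℂ} {z : ℂ} (hz : z ≠ 0) (hF : F z ≠ 0) :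
    bazFun 1 F z = deriv F z := by
  rw [bazFun, if_neg hz, ofReal_one, cpow_one]
  field_simp

theorem Ups_zero (lam al be : ℝ) (n : ℕ) : Ups lam al be 0 n = 1 := pow_zero _

theorem Cdel_zero {n : ℕ} (hn : n ≠ 0) : Cdel 0 n = 1 := by
  rw [Cdel, add_zero, zero_add, Real.Gamma_one, mul_one,
    div_self (Real.Gamma_pos_of_pos (by positivity)).ne']

namespace IsInA

variable {f : ℂ → ℂ} {a : ℕ → ℂ}

theorem iteratedDeriv_zero_eq (hf : IsInA f a) (n : ℕ) : iteratedDeriv n f 0 = n ! * a n := by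
  have hball : HasFPowerSeriesOnBall f (FormalMultilinearSeries.ofScalars ℂ a) 0 (1 : ℝ≥0) :=
    hasFPowerSeriesOnBall_ofScalars_of_hasSum one_pos fun z hz =>
      hf.2.2.2 z (by simpa [unitDisk] using hz)
  rw [iteratedDeriv_eq_iteratedFDeriv, ← hball.factorial_smul 1 n]
  simp [nsmul_eq_mul]

theorem eqOn_Dop_zero_zero (hf : IsInA f a) (lam al be : ℝ) :
    EqOn (Dop lam al be 0 0 a) f unitDisk := by
  intro z hz
  have htail : HasSum (fun n => if 2 ≤ n then a n * z ^ n else 0) (f z - z) := by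
    have hcoeffs : (fun n => if 2 ≤ n then a n * z ^ n else 0)
        = fun n => a n * z ^ n - if n = 1 then z else 0 := by
      funext n
      rcases n with _ | _ | n <;> simp [hf.2.1, hf.2.2.1]
    rw [hcoeffs]
    exact (hf.2.2.2 z hz).sub (hasSum_ite_eq 1 z)
  have hterm : ∀ n,
      (if 2 ≤ n then (Ups lam al be 0 n : ℂ) * (Cdel 0 n : ℂ) * a n * z ^ n else 0)
        = if 2 ≤ n then a n * z ^ n else 0 := by
    intro n
    split_ifs with hn
    · rw [Ups_zero, Cdel_zero (by omega)]
      push_cast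
      ring
    · rfl
  rw [Dop, tsum_congr hterm, htail.tsum_eq]
  ring

theorem eqOn_bazFun_one_Dop_deriv {lam al be : ℝ} (hf : IsInA f a)
    (hnz : ∀ z ∈ unitDisk, z ≠ 0 → Dop lam al be 0 0 a z ≠ 0) :
    EqOn (bazFun 1 (Dop lam al be 0 0 a)) (deriv f) unitDisk := by
  intro z hz
  rcases eq_or_ne z 0 with rfl | hz0
  · rw [bazFun, if_pos rfl, ← iteratedDeriv_one, hf.iteratedDeriv_zero_eq, hf.2.2.1]
    simp
  · rw [bazFun_one_of_ne_zero hz0 (hnz z hz hz0)]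
    exact ((hf.eqOn_Dop_zero_zero lam al be).eventuallyEq_of_mem
      (isOpen_ball.mem_nhds hz)).deriv_eq

theorem norm_coeff_le_of_deriv_subord {κ : ℂ} (hf : IsInA f a)
    (hsub : Subord (deriv f) fun z => (1 + κ * z) / (1 - z)) :
    2 * ‖a 2‖ ≤ ‖1 + κ‖ ∧ 3 * ‖a 3‖ ≤ ‖1 + κ‖ := by
  obtain ⟨u, hu, hu0, hub, heq⟩ := hsub
  have hdisk : unitDisk ∈ 𝓝 0 := ball_mem_nhds 0 one_pos
  have hmaps : MapsTo u (ball 0 1) (ball 0 1) := fun z hz => by simpa using hub z hz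
  obtain ⟨h1, h2⟩ := deriv_and_iteratedDeriv_two_zero_of_eventuallyEq_mobius_comp
    (hf.1.deriv 0 (mem_of_mem_nhds hdisk)) (hu 0 (mem_of_mem_nhds hdisk)) hu0
    (Filter.mem_of_superset hdisk heq)
  rw [← iteratedDeriv_one, ← iteratedDeriv_succ', hf.iteratedDeriv_zero_eq] at h1
  rw [← iteratedDeriv_succ', hf.iteratedDeriv_zero_eq] at h2
  have hu1 : ‖deriv u 0‖ ≤ 1 := by
    refine norm_deriv_le_one_of_mapsTo_ball hu.differentiableOn ?_ one_pos
    rw [hu0]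
    exact hmaps.mono_right ball_subset_closedBall
  have hu2 :=
    Complex.norm_iteratedDeriv_two_zero_div_two_le_of_mapsTo_ball hu.differentiableOn hu0 hmaps
  have ha2 : 2 * a 2 = (1 + κ) * deriv u 0 := by simpa using h1
  have ha3 : 3 * a 3 = (1 + κ) * (iteratedDeriv 2 u 0 / 2 + deriv u 0 ^ 2) := by
    simp only [Nat.reduceAdd, Nat.factorial] at h2
    linear_combination h2 / 2
  constructor
  · calc 2 * ‖a 2‖ = ‖1 + κ‖ * ‖deriv u 0‖ := by simpa using congrArg norm ha2
      _ ≤ ‖1 + κ‖ := mul_le_of_le_one_right (norm_nonneg _) hu1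
  · calc 3 * ‖a 3‖ = ‖1 + κ‖ * ‖iteratedDeriv 2 u 0 / 2 + deriv u 0 ^ 2‖ := by
          rw [← norm_mul, ← ha3, norm_mul, RCLike.norm_ofNat]
      _ ≤ ‖1 + κ‖ := by
          refine mul_le_of_le_one_right (norm_nonneg _) ((norm_add_le _ _).trans ?_)
          rw [norm_pow]
          linarith

end IsInA

theorem cor_3_18_general (α β lam : ℝ)
    (ζ : ℝ) (hζ1 : ζ < 1)
    (f g : ℂ → ℂ) (a b : ℕ → ℂ)
    (hmem : MemB lam α β 0 0 1 (fun z : ℂ => (1 + (1 - 2 * (ζ : ℂ)) * z) / (1 - z)) f g a b) :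
    ‖a 2‖ ≤ Real.sqrt (2 * (1 - ζ) / 3) ∧
    ‖a 3‖ ≤ 2 * (1 - ζ) / 3 + (1 - ζ) ^ 2 := by
  obtain ⟨hf, -, hg, -, -, -, hb3, hnf, hng, hsf, hsg⟩ := hmem
  have hκ : ‖1 + (1 - 2 * (ζ : ℂ))‖ = 2 * (1 - ζ) := by
    rw [show 1 + (1 - 2 * (ζ : ℂ)) = ((2 * (1 - ζ) : ℝ) : ℂ) by push_cast; ring, norm_real,
      Real.norm_of_nonneg (by linarith)]
  obtain ⟨ha2, ha3⟩ :=
    hf.norm_coeff_le_of_deriv_subord (hsf.congr_left (hf.eqOn_bazFun_one_Dop_deriv hnf))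
  obtain ⟨-, hb3'⟩ :=
    hg.norm_coeff_le_of_deriv_subord (hsg.congr_left (hg.eqOn_bazFun_one_Dop_deriv hng))
  rw [hκ] at ha2 ha3 hb3'
  have hsq : 6 * ‖a 2‖ ^ 2 ≤ 3 * ‖a 3‖ + 3 * ‖b 3‖ :=
    calc 6 * ‖a 2‖ ^ 2 = ‖3 * a 3 + 3 * b 3‖ := by
          rw [hb3, show 3 * a 3 + 3 * (2 * a 2 ^ 2 - a 3) = 6 * a 2 ^ 2 by ring]
          simp
      _ ≤ 3 * ‖a 3‖ + 3 * ‖b 3‖ := by simpa using norm_add_le (3 * a 3) (3 * b 3)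
  have hcube : 6 * ‖a 3‖ ≤ 6 * ‖a 2‖ ^ 2 + 3 * ‖a 3‖ + 3 * ‖b 3‖ :=
    calc 6 * ‖a 3‖ = ‖6 * a 2 ^ 2 + 3 * a 3 - 3 * b 3‖ := by
          rw [hb3, show 6 * a 2 ^ 2 + 3 * a 3 - 3 * (2 * a 2 ^ 2 - a 3) = 6 * a 3 by ring]
          simp
      _ ≤ ‖6 * a 2 ^ 2‖ + ‖3 * a 3‖ + ‖3 * b 3‖ :=
          norm_sub_le_of_le (norm_add_le _ _) le_rfl
      _ = 6 * ‖a 2‖ ^ 2 + 3 * ‖a 3‖ + 3 * ‖b 3‖ := by simp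
  constructor
  · exact Real.le_sqrt_of_sq_le (by linarith)
  · nlinarith [norm_nonneg (a 2)]

theorem cor_3_18 (α β lam : ℝ)
    (hα0 : 0 < α) (hα1 : α ≤ 1) (hβ0 : 0 < β) (hβ1 : β ≤ 1)
    (hlam : 0 ≤ lam) 
    (ζ : ℝ) (hζ0 : 0 ≤ ζ) (hζ1 : ζ < 1)
    (f g : ℂ → ℂ) (a b : ℕ → ℂ)
    (hmem : MemB lam α β 0 0 1 (fun z : ℂ => (1 + (1 - 2 * (ζ : ℂ)) * z) / (1 - z)) f g a b) :
    ‖a 2‖ ≤ Real.sqrt (2 * (1 - ζ) / 3) ∧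
    ‖a 3‖ ≤ 2 * (1 - ζ) / 3 + (1 - ζ) ^ 2 :=
  cor_3_18_general α β lam ζ hζ1 f g a b hmem
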